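/- For every integer n ≥ 1, I(n) = 3/4 + 2 ∑_{k=1}^∞ n^{-k} ∑_{m=1}^∞ (-1)^{m-k} (ζ_{m-1}({1}_{k-1})/m) ∫₀¹ uᵐⁿ/(1+u)³ du, where the inner series converges absolutely for each k and the outer series converges absolutely. -/

import Mathlib

/-- Truncated multiple zeta value `ζ_r({1}_k)`. -/
noncomputable def zt1 : ℕ → ℕ → ℝ
  | _, 0 => 1
  | r, k + 1 => ∑ n ∈ Finset.Icc 1 r, (1 / (n : ℝ)) * zt1 (n - 1) k

/-!
Symmetry about `x = 1/2` and the substitution `x = u / (1 + u)` give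
`I(n) = 2 ∫₀¹ (1 + uⁿ)^{1/n} (1 + u)⁻³ du`. Expand `(1 + uⁿ)^{1/n} = exp (log (1 + uⁿ) / n)` into
its exponential series: the term `k = 0` contributes `3/4`, and for `k ≥ 1` one substitutes
`t = uⁿ` into the generating function
`log (1 + t) ^ k / k! = ∑_{m ≥ 1} (-1)^{m-k} ζ_{m-1}({1}_{k-1}) tᵐ / m`   (`0 ≤ t < 1`).
This is proved by induction on `k`: both sides vanish at `0`, the derivative of the left side is
`log (1 + t) ^ (k-1) / ((k-1)! (1 + t))`, and dividing a power series by `1 + t` is exactly the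
recurrence `ζ_m({1}_k) = ζ_{m-1}({1}_k) + ζ_{m-1}({1}_{k-1}) / m`. All interchanges of sums and
integrals converge absolutely because `0 ≤ log (1 + uⁿ) / n ≤ log 2` and
`ζ_m({1}_k) ≤ (1 + log m)^k`.
-/

open Real Filter Asymptotics
open scoped Nat

lemma harmonic_cast_nonneg (r : ℕ) : (0 : ℝ) ≤ harmonic r :=
  Rat.cast_nonneg.2 (by rw [harmonic_eq_sum_Icc]; positivity)

lemma zt1_zero_succ (k : ℕ) : zt1 0 (k + 1) = 0 := by
  simp [zt1]

lemma zt1_succ_succ (r k : ℕ) : zt1 (r + 1) (k + 1) = zt1 r (k + 1) + zt1 r k / (r + 1) := by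
  rw [zt1, zt1, Finset.sum_Icc_succ_top (by omega)]
  simp [div_eq_inv_mul]

lemma zt1_nonneg (r k : ℕ) : 0 ≤ zt1 r k := by
  induction k generalizing r with
  | zero => simp [zt1]
  | succ k ih => exact Finset.sum_nonneg fun n _ => mul_nonneg (by positivity) (ih _)

lemma zt1_monotone (k : ℕ) : Monotone fun r => zt1 r k := by
  refine monotone_nat_of_le_succ fun r => ?_
  cases k with
  | zero => simp [zt1]
  | succ k =>
    rw [zt1_succ_succ]
    have := zt1_nonneg r k
    simp only [le_add_iff_nonneg_right]
    positivity

lemma zt1_succ_le_harmonic_mul (r k : ℕ) : zt1 r (k + 1) ≤ harmonic r * zt1 r k := by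
  rw [zt1, harmonic_eq_sum_Icc, Rat.cast_sum, Finset.sum_mul]
  refine Finset.sum_le_sum fun i hi => ?_
  rw [Rat.cast_inv, Rat.cast_natCast, one_div]
  have hir := (Finset.mem_Icc.1 hi).2
  gcongr
  exact zt1_monotone k (by omega)

lemma zt1_le_harmonic_pow (r k : ℕ) : zt1 r k ≤ (harmonic r : ℝ) ^ k := by
  induction k with
  | zero => simp [zt1]
  | succ k ih =>
    rw [pow_succ']
    exact (zt1_succ_le_harmonic_mul r k).trans (by gcongr; exact harmonic_cast_nonneg r)

lemma zt1_le_one_add_log_pow (r k : ℕ) : zt1 r k ≤ (1 + log r) ^ k :=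
  (zt1_le_harmonic_pow r k).trans
    (pow_le_pow_left₀ (harmonic_cast_nonneg r) (harmonic_le_one_add_log r) k)

lemma zt1_le_pow (r k : ℕ) : zt1 r k ≤ (r : ℝ) ^ k := by
  refine (zt1_le_harmonic_pow r k).trans (pow_le_pow_left₀ (harmonic_cast_nonneg r) ?_ k)
  rw [harmonic_eq_sum_Icc]
  push_cast
  calc ∑ i ∈ Finset.Icc 1 r, (i : ℝ)⁻¹ ≤ ∑ i ∈ Finset.Icc 1 r, (1 : ℝ) :=
        Finset.sum_le_sum fun i hi =>
          inv_le_one_of_one_le₀ (by exact_mod_cast (Finset.mem_Icc.1 hi).1)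
    _ = r := by simp

lemma summable_one_add_log_pow_div_sq (k : ℕ) :
    Summable fun m : ℕ => (1 + log m) ^ k / (m : ℝ) ^ 2 := by
  have hlog : (fun x : ℝ => (1 + log x) ^ k) =O[atTop] fun x => x ^ (1 / 2 : ℝ) := by
    have h1 : (fun x : ℝ => 1 + log x) =O[atTop] log :=
      ((isLittleO_one_left_iff ℝ).2 (tendsto_norm_atTop_atTop.comp tendsto_log_atTop)).isBigO.add
        (isBigO_refl _ _)
    have h2 := (isLittleO_log_rpow_rpow_atTop (k : ℝ) (by norm_num : (0 : ℝ) < 1 / 2)).isBigO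
    simp only [rpow_natCast] at h2
    exact (h1.pow k).trans h2
  have hdecay : (fun x : ℝ => (1 + log x) ^ k / x ^ 2) =O[atTop] fun x => x ^ (-3 / 2 : ℝ) := by
    refine (hlog.mul (isBigO_refl (fun x : ℝ => (x ^ 2)⁻¹) _)).congr' (.of_eq rfl) ?_
    filter_upwards [eventually_gt_atTop 0] with x hx
    rw [← rpow_natCast, ← rpow_neg hx.le, ← rpow_add hx]
    norm_num
  exact summable_of_isBigO_nat (summable_nat_rpow.2 (by norm_num))
    (hdecay.comp_tendsto tendsto_natCast_atTop_atTop)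

theorem hasSum_intervalIntegral_of_summable_integral_norm {ι E : Type*} [Countable ι]
    [NormedAddCommGroup E] [NormedSpace ℝ E] {F : ι → ℝ → E} {a b : ℝ} (hab : a ≤ b)
    (hF : ∀ i, IntervalIntegrable (F i) MeasureTheory.volume a b)
    (hS : Summable fun i => ∫ x in a..b, ‖F i x‖) :
    HasSum (fun i => ∫ x in a..b, F i x) (∫ x in a..b, ∑' i, F i x) := by
  simp only [intervalIntegral.integral_of_le hab] at hS ⊢
  exact MeasureTheory.hasSum_integral_of_summable_integral_norm (fun i => (hF i).1) hS

theorem hasSum_integral_mul_pow {a : ℕ → ℝ} {t : ℝ} (ht : 0 ≤ t)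
    (ha : Summable fun p => |a p| * t ^ p) :
    HasSum (fun p => a p / (p + 1) * t ^ (p + 1)) (∫ s in (0 : ℝ)..t, ∑' p, a p * s ^ p) := by
  have hint : ∀ (c : ℝ) (p : ℕ), ∫ s in (0 : ℝ)..t, c * s ^ p = c / (p + 1) * t ^ (p + 1) := by
    intro c p
    rw [intervalIntegral.integral_const_mul, integral_pow]
    ring
  have hnorm : ∀ p, ∫ s in (0 : ℝ)..t, ‖a p * s ^ p‖ = |a p| / (p + 1) * t ^ (p + 1) := by
    intro p
    rw [← hint]
    refine intervalIntegral.integral_congr fun s hs => ?_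
    rw [Set.uIcc_of_le ht] at hs
    simp [abs_of_nonneg hs.1]
  have hsum : Summable fun p => |a p| / (p + 1) * t ^ (p + 1) := by
    refine .of_nonneg_of_le (fun p => by have := pow_nonneg ht (p + 1); positivity)
      (fun p => ?_) (ha.mul_right t)
    rw [pow_succ, ← mul_assoc, div_mul_eq_mul_div]
    exact mul_le_mul_of_nonneg_right (div_le_self (mul_nonneg (abs_nonneg _) (pow_nonneg ht p))
      (by simp)) ht
  simpa only [hint] using hasSum_intervalIntegral_of_summable_integral_norm ht
    (fun p => (by fun_prop : Continuous fun s : ℝ => a p * s ^ p).intervalIntegrable _ _)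
    (by simpa only [hnorm] using hsum)

theorem integral_log_one_add_pow_div {t : ℝ} (ht : -1 < t) (k : ℕ) :
    ∫ s in (0 : ℝ)..t, log (1 + s) ^ k / (k ! * (1 + s)) = log (1 + t) ^ (k + 1) / (k + 1)! := by
  have hpos : ∀ s ∈ Set.uIcc 0 t, 0 < 1 + s := fun s hs =>
    (Set.mem_uIcc.1 hs).elim (fun h => by linarith [h.1]) fun h => by linarith [h.1]
  have hderiv : ∀ s ∈ Set.uIcc 0 t, HasDerivAt (fun x => log (1 + x) ^ (k + 1) / (k + 1)!)
      (log (1 + s) ^ k / (k ! * (1 + s))) s := by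
    intro s hs
    have := ((((hasDerivAt_id s).const_add 1).log (hpos s hs).ne').pow (k + 1)).div_const
      ((k + 1)! : ℝ)
    refine this.congr_deriv ?_
    simp only [id, Nat.factorial_succ, Nat.add_sub_cancel]
    have := hpos s hs
    push_cast
    field_simp
  have hcont : ContinuousOn (fun s => log (1 + s) ^ k / (k ! * (1 + s))) (Set.uIcc 0 t) :=
    ((continuousOn_const.add continuousOn_id).log fun s hs => (hpos s hs).ne').pow k |>.div
      (by fun_prop) fun s hs => by have := hpos s hs; positivity
  rw [intervalIntegral.integral_eq_sub_of_hasDerivAt hderiv hcont.intervalIntegrable]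
  simp

lemma summable_zt1_mul_pow (k : ℕ) {t : ℝ} (ht : |t| < 1) :
    Summable fun m => zt1 m k * t ^ m := by
  refine .of_norm_bounded (summable_pow_mul_geometric_of_norm_lt_one k (r := |t|) (by simpa))
    fun m => ?_
  rw [norm_mul, norm_pow, Real.norm_of_nonneg (zt1_nonneg m k), Real.norm_eq_abs]
  exact mul_le_mul_of_nonneg_right (zt1_le_pow m k) (by positivity)

lemma hasSum_zt1_succ_mul_pow_of_hasSum {k : ℕ} {t L : ℝ} (ht : |t| < 1)
    (h : HasSum (fun m => (-1) ^ (m + k) * zt1 m k / (m + 1) * t ^ (m + 1)) L) :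
    HasSum (fun m => (-1) ^ (m + (k + 1)) * zt1 m (k + 1) * t ^ m) (L / (1 + t)) := by
  set b : ℕ → ℝ := fun m => (-1) ^ (m + (k + 1)) * zt1 m (k + 1)
  obtain ⟨S, hS⟩ : Summable fun m => b m * t ^ m := .of_abs <| by
    simpa [b, abs_mul, abs_of_nonneg (zt1_nonneg _ _)] using
      summable_zt1_mul_pow (k + 1) (t := |t|) (by simpa)
  have hshift : HasSum (fun m => b (m + 1) * t ^ (m + 1)) S := by
    simpa [b, zt1_zero_succ] using (hasSum_nat_add_iff' 1).2 hS
  have hrec : HasSum (fun m => (-1) ^ (m + k) * zt1 m k / (m + 1) * t ^ (m + 1)) (S + t * S) := by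
    convert hshift.add (hS.mul_left t) using 1
    funext m
    simp only [b, zt1_succ_succ]
    ring
  have h1t : 1 + t ≠ 0 := by linarith [neg_abs_le t]
  rw [h.unique hrec, show S + t * S = S * (1 + t) by ring, mul_div_cancel_right₀ _ h1t]
  exact hS

lemma hasSum_zt1_div_mul_pow_of_hasSum {k : ℕ} {t : ℝ} (ht0 : 0 ≤ t) (ht1 : t < 1)
    (h : ∀ s ∈ Set.Icc 0 t,
      HasSum (fun m => (-1) ^ (m + k) * zt1 m k * s ^ m) (log (1 + s) ^ k / (k ! * (1 + s)))) :
    HasSum (fun m => (-1) ^ (m + k) * zt1 m k / (m + 1) * t ^ (m + 1))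
      (log (1 + t) ^ (k + 1) / (k + 1)!) := by
  have habs : Summable fun m => |(-1) ^ (m + k) * zt1 m k| * t ^ m := by
    simpa [abs_of_nonneg (zt1_nonneg _ _)] using
      summable_zt1_mul_pow k (abs_lt.2 ⟨by linarith, ht1⟩)
  have := hasSum_integral_mul_pow ht0 habs
  rwa [intervalIntegral.integral_congr fun s hs => (h s (Set.uIcc_of_le ht0 ▸ hs)).tsum_eq,
    integral_log_one_add_pow_div (by linarith)] at this

theorem hasSum_zt1_mul_pow (k : ℕ) {t : ℝ} (ht0 : 0 ≤ t) (ht1 : t < 1) :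
    HasSum (fun m => (-1) ^ (m + k) * zt1 m k * t ^ m) (log (1 + t) ^ k / (k ! * (1 + t))) := by
  induction k generalizing t with
  | zero =>
    simpa [zt1, ← mul_pow, sub_eq_add_neg] using
      hasSum_geometric_of_abs_lt_one (r := -t) (by rw [abs_neg, abs_of_nonneg ht0]; exact ht1)
  | succ k ih =>
    have := hasSum_zt1_succ_mul_pow_of_hasSum (abs_lt.2 ⟨by linarith, ht1⟩)
      (hasSum_zt1_div_mul_pow_of_hasSum ht0 ht1 fun s hs => ih hs.1 (hs.2.trans_lt ht1))
    rwa [div_div] at this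

theorem hasSum_zt1_div_mul_pow (k : ℕ) {t : ℝ} (ht0 : 0 ≤ t) (ht1 : t < 1) :
    HasSum (fun m => (-1) ^ (m + k) * zt1 m k / (m + 1) * t ^ (m + 1))
      (log (1 + t) ^ (k + 1) / (k + 1)!) :=
  hasSum_zt1_div_mul_pow_of_hasSum ht0 ht1 fun _ hs =>
    hasSum_zt1_mul_pow k hs.1 (hs.2.trans_lt ht1)

theorem integral_eq_two_mul_integral_of_symm {f : ℝ → ℝ} {a b : ℝ} (hf : Continuous f)
    (hsymm : ∀ x, f (a + b - x) = f x) :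
    ∫ x in a..b, f x = 2 * ∫ x in a..(a + b) / 2, f x := by
  have hreflect : ∫ x in (a + b) / 2..b, f x = ∫ x in a..(a + b) / 2, f x := by
    have h := intervalIntegral.integral_comp_sub_left (a := a) (b := (a + b) / 2) f (a + b)
    rwa [show a + b - (a + b) / 2 = (a + b) / 2 by ring, add_sub_cancel_left,
      intervalIntegral.integral_congr fun x _ => hsymm x, eq_comm] at h
  rw [← intervalIntegral.integral_add_adjacent_intervals (hf.intervalIntegrable a ((a + b) / 2))
    (hf.intervalIntegrable _ b), hreflect, two_mul]

theorem integral_comp_div_one_add {g : ℝ → ℝ} (hg : Continuous g) :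
    ∫ x in (0 : ℝ)..1 / 2, g x = ∫ u in (0 : ℝ)..1, g (u / (1 + u)) / (1 + u) ^ 2 := by
  have hpos : ∀ u ∈ Set.uIcc (0 : ℝ) 1, 0 < 1 + u := fun u hu => by
    rw [Set.uIcc_of_le zero_le_one] at hu; linarith [hu.1]
  have hderiv : ∀ u ∈ Set.uIcc (0 : ℝ) 1,
      HasDerivAt (fun v => v / (1 + v)) (((1 + u) ^ 2)⁻¹) u := by
    intro u hu
    refine ((hasDerivAt_id u).div ((hasDerivAt_id u).const_add 1) (hpos u hu).ne').congr_deriv ?_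
    field_simp
    simp
  have hcont : ContinuousOn (fun u : ℝ => ((1 + u) ^ 2)⁻¹) (Set.uIcc 0 1) :=
    (by fun_prop : ContinuousOn (fun u : ℝ => (1 + u) ^ 2) _).inv₀ fun u hu =>
      (pow_pos (hpos u hu) 2).ne'
  have := intervalIntegral.integral_deriv_smul_comp hderiv hcont hg
  norm_num at this
  rw [← this]
  refine intervalIntegral.integral_congr fun u _ => ?_
  simp [div_eq_inv_mul]

theorem integral_pow_add_one_sub_pow_rpow_inv {n : ℕ} (hn : n ≠ 0) :
    ∫ x in (0 : ℝ)..1, (x ^ n + (1 - x) ^ n) ^ (n : ℝ)⁻¹ =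
      2 * ∫ u in (0 : ℝ)..1, (1 + u ^ n) ^ (n : ℝ)⁻¹ / (1 + u) ^ 3 := by
  have hcont : Continuous fun x : ℝ => (x ^ n + (1 - x) ^ n) ^ (n : ℝ)⁻¹ :=
    (by fun_prop : Continuous fun x : ℝ => x ^ n + (1 - x) ^ n).rpow_const
      fun _ => Or.inr (by positivity)
  rw [integral_eq_two_mul_integral_of_symm hcont fun x => by ring_nf, zero_add,
    integral_comp_div_one_add hcont]
  congr 1
  refine intervalIntegral.integral_congr fun u hu => ?_
  rw [Set.uIcc_of_le zero_le_one] at hu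
  have hu1 : 0 < 1 + u := by linarith [hu.1]
  have hhom : (u / (1 + u)) ^ n + (1 - u / (1 + u)) ^ n = (1 + u ^ n) / (1 + u) ^ n := by
    rw [one_sub_div hu1.ne', add_sub_cancel_right, div_pow, div_pow, one_pow, ← add_div, add_comm]
  rw [hhom, div_rpow (by have := hu.1; positivity) (by positivity), ← rpow_natCast (1 + u) n,
    ← rpow_mul hu1.le, mul_inv_cancel₀ (by exact_mod_cast hn), rpow_one]
  field_simp

theorem hasSum_log_mul_pow_div_factorial {x : ℝ} (hx : 0 < x) (y : ℝ) :
    HasSum (fun k => (log x * y) ^ k / k !) (x ^ y) := by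
  rw [rpow_def_of_pos hx, exp_eq_exp_ℝ]
  exact NormedSpace.expSeries_div_hasSum_exp _

lemma norm_log_one_add_pow_div_pow_le {n : ℕ} (hn : 0 < n) (k : ℕ) {u : ℝ} (hu : u ∈ Set.Icc 0 1) :
    ‖(log (1 + u ^ n) / n) ^ k / k ! / (1 + u) ^ 3‖ ≤ log 2 ^ k / k ! := by
  obtain ⟨hu0, hu1⟩ := hu
  have hlog0 : 0 ≤ log (1 + u ^ n) := log_nonneg (by linarith [pow_nonneg hu0 n])
  have hlog2 : log (1 + u ^ n) / n ≤ log 2 :=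
    (div_le_self hlog0 (by exact_mod_cast hn)).trans
      (log_le_log (by positivity) (by linarith [pow_le_one₀ hu0 hu1 (n := n)]))
  rw [Real.norm_of_nonneg (by positivity)]
  calc (log (1 + u ^ n) / n) ^ k / k ! / (1 + u) ^ 3 ≤ (log (1 + u ^ n) / n) ^ k / k ! :=
        div_le_self (by positivity) (one_le_pow₀ (by linarith))
    _ ≤ log 2 ^ k / k ! := by gcongr

theorem hasSum_integral_log_one_add_pow_div {n : ℕ} (hn : 0 < n) :
    HasSum (fun k => ∫ u in (0 : ℝ)..1, (log (1 + u ^ n) / n) ^ k / k ! / (1 + u) ^ 3)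
      (∫ u in (0 : ℝ)..1, (1 + u ^ n) ^ (n : ℝ)⁻¹ / (1 + u) ^ 3) := by
  have hcont : ∀ k, ContinuousOn (fun u : ℝ => (log (1 + u ^ n) / n) ^ k / k ! / (1 + u) ^ 3)
      (Set.uIcc 0 1) := by
    intro k
    rw [Set.uIcc_of_le zero_le_one]
    refine ContinuousOn.div (ContinuousOn.div_const (ContinuousOn.pow (ContinuousOn.div_const
      (ContinuousOn.log (by fun_prop) fun u hu => ?_) _) _) _) (by fun_prop) fun u hu => ?_
    · have := hu.1; positivity
    · have := hu.1; positivity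
  have hnorm : ∀ k, ∫ u in (0 : ℝ)..1, ‖(log (1 + u ^ n) / n) ^ k / k ! / (1 + u) ^ 3‖ ≤
      log 2 ^ k / k ! := by
    intro k
    calc _ ≤ ∫ _ in (0 : ℝ)..1, log 2 ^ k / k ! :=
          intervalIntegral.integral_mono_on zero_le_one (hcont k).norm.intervalIntegrable
            intervalIntegrable_const fun _ hu => norm_log_one_add_pow_div_pow_le hn k hu
      _ = log 2 ^ k / k ! := by simp
  have hsum := hasSum_intervalIntegral_of_summable_integral_norm (E := ℝ) zero_le_one
    (fun k => (hcont k).intervalIntegrable) (.of_nonneg_of_le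
      (fun _ => intervalIntegral.integral_nonneg zero_le_one fun _ _ => norm_nonneg _)
      hnorm (Real.summable_pow_div_factorial (log 2)))
  rwa [intervalIntegral.integral_congr (g := fun u => (1 + u ^ n) ^ (n : ℝ)⁻¹ / (1 + u) ^ 3)
    fun u hu => ?_] at hsum
  rw [Set.uIcc_of_le zero_le_one] at hu
  simp_rw [div_eq_mul_inv (log _)]
  exact ((hasSum_log_mul_pow_div_factorial
    (add_pos_of_pos_of_nonneg one_pos (pow_nonneg hu.1 n)) _).div_const _).tsum_eq

lemma summable_zt1_div_sq (k : ℕ) : Summable fun m : ℕ => zt1 m k / ((m : ℝ) + 1) ^ 2 := by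
  refine .of_nonneg_of_le (fun m => by have := zt1_nonneg m k; positivity) (fun m => ?_)
    ((summable_nat_add_iff 1).2 (summable_one_add_log_pow_div_sq k))
  push_cast
  gcongr
  exact (zt1_monotone k m.le_succ).trans (by exact_mod_cast zt1_le_one_add_log_pow (m + 1) k)

lemma continuousOn_pow_div_one_add_pow_three (N : ℕ) :
    ContinuousOn (fun u : ℝ => u ^ N / (1 + u) ^ 3) (Set.uIcc 0 1) := by
  rw [Set.uIcc_of_le zero_le_one]
  exact ContinuousOn.div (by fun_prop) (by fun_prop) fun u hu => by have := hu.1; positivity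

lemma integral_norm_mul_pow_div_one_add_pow_three_le (c : ℝ) {m N : ℕ} (hmN : m ≤ N) :
    ∫ u in (0 : ℝ)..1, ‖c * (u ^ N / (1 + u) ^ 3)‖ ≤ |c| / (m + 1) := by
  calc _ ≤ ∫ u in (0 : ℝ)..1, |c| * u ^ m := by
        refine intervalIntegral.integral_mono_on zero_le_one
          ((continuousOn_const.mul (continuousOn_pow_div_one_add_pow_three N)).norm
            |>.intervalIntegrable)
          ((by fun_prop : Continuous fun u : ℝ => |c| * u ^ m).intervalIntegrable _ _)
          fun u ⟨hu0, hu1⟩ => ?_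
        have h1u : 1 ≤ 1 + u := by linarith
        rw [norm_mul, Real.norm_eq_abs, Real.norm_of_nonneg
          (div_nonneg (pow_nonneg hu0 _) (pow_nonneg (by linarith) 3))]
        refine mul_le_mul_of_nonneg_left ?_ (abs_nonneg _)
        calc u ^ N / (1 + u) ^ 3 ≤ u ^ N := div_le_self (pow_nonneg hu0 _) (one_le_pow₀ h1u)
          _ ≤ u ^ m := pow_le_pow_of_le_one hu0 hu1 hmN
    _ = |c| / (m + 1) := by
        rw [intervalIntegral.integral_const_mul, integral_pow]
        simp [div_eq_mul_inv]

theorem hasSum_zt1_mul_integral_pow {n : ℕ} (hn : 0 < n) (k : ℕ) :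
    HasSum (fun m : ℕ => (-1 : ℝ) ^ ((m + 1) + (k + 1)) * zt1 m k / (m + 1) *
        ∫ u in (0 : ℝ)..1, u ^ ((m + 1) * n) / (1 + u) ^ 3)
      (∫ u in (0 : ℝ)..1, log (1 + u ^ n) ^ (k + 1) / (k + 1)! / (1 + u) ^ 3) := by
  set c : ℕ → ℝ := fun m => (-1) ^ ((m + 1) + (k + 1)) * zt1 m k / (m + 1)
  have hc : ∀ m, c m = (-1) ^ (m + k) * zt1 m k / (m + 1) := fun m => by simp only [c]; ring
  have hnorm : ∀ m, ∫ u in (0 : ℝ)..1, ‖c m * (u ^ ((m + 1) * n) / (1 + u) ^ 3)‖ ≤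
      zt1 m k / ((m : ℝ) + 1) ^ 2 := by
    intro m
    refine (integral_norm_mul_pow_div_one_add_pow_three_le (c m) (by nlinarith)).trans_eq ?_
    rw [hc, abs_div, abs_mul, abs_pow, abs_neg, abs_one, one_pow, one_mul,
      abs_of_nonneg (zt1_nonneg m k), abs_of_pos (by positivity : (0 : ℝ) < m + 1)]
    field_simp
  have hsum := hasSum_intervalIntegral_of_summable_integral_norm
    (F := fun m u => c m * (u ^ ((m + 1) * n) / (1 + u) ^ 3)) zero_le_one
    (fun _ =>
      (continuousOn_const.mul (continuousOn_pow_div_one_add_pow_three _)).intervalIntegrable)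
    (.of_nonneg_of_le
      (fun _ => intervalIntegral.integral_nonneg zero_le_one fun _ _ => norm_nonneg _)
      hnorm (summable_zt1_div_sq k))
  simp only [intervalIntegral.integral_const_mul] at hsum
  rwa [intervalIntegral.integral_congr_ae
    (g := fun u => log (1 + u ^ n) ^ (k + 1) / (k + 1)! / (1 + u) ^ 3) ?_] at hsum
  filter_upwards [MeasureTheory.Measure.ae_ne MeasureTheory.volume 1] with u hu1 hu
  rw [Set.uIoc_of_le zero_le_one] at hu
  have hun : u ^ n < 1 := pow_lt_one₀ hu.1.le (lt_of_le_of_ne hu.2 hu1) hn.ne'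
  rw [← ((hasSum_zt1_div_mul_pow k (pow_nonneg hu.1.le n) hun).div_const ((1 + u) ^ 3)).tsum_eq]
  refine tsum_congr fun m => ?_
  rw [hc, ← pow_mul, mul_comm n]
  ring

theorem integral_inv_one_add_pow_three : ∫ u in (0 : ℝ)..1, ((1 + u) ^ 3)⁻¹ = 3 / 8 := by
  calc ∫ u in (0 : ℝ)..1, ((1 + u) ^ 3)⁻¹ = ∫ u in (0 : ℝ)..1, (1 + u) ^ (-3 : ℤ) := by
        simp [zpow_neg]
    _ = 3 / 8 := by
        rw [intervalIntegral.integral_comp_add_left (fun x : ℝ => x ^ (-3 : ℤ)),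
          integral_zpow (Or.inr ⟨by norm_num, by norm_num [Set.mem_uIcc]⟩)]
        norm_num

/-- Indices are shifted: `k + 1` and `m + 1` run over the `k, m ≥ 1` of the informal statement,
and `(-1)^{m-k} = (-1)^{m+k}`. -/
theorem stmt2 (n : ℕ) (hn : 1 ≤ n) :
    (∀ k : ℕ, Summable (fun m : ℕ =>
        |(-1 : ℝ) ^ ((m + 1) + (k + 1)) * zt1 m k / (m + 1) *
          ∫ u in (0:ℝ)..1, u ^ ((m + 1) * n) / (1 + u) ^ 3|)) ∧
    Summable (fun k : ℕ =>
        |((n : ℝ) ^ (k + 1))⁻¹ * ∑' m : ℕ,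
          (-1 : ℝ) ^ ((m + 1) + (k + 1)) * zt1 m k / (m + 1) *
            ∫ u in (0:ℝ)..1, u ^ ((m + 1) * n) / (1 + u) ^ 3|) ∧
    (∫ x in (0:ℝ)..1, (x ^ n + (1 - x) ^ n) ^ ((n : ℝ)⁻¹)) =
      3 / 4 + 2 * ∑' k : ℕ, ((n : ℝ) ^ (k + 1))⁻¹ * ∑' m : ℕ,
        (-1 : ℝ) ^ ((m + 1) + (k + 1)) * zt1 m k / (m + 1) *
          ∫ u in (0:ℝ)..1, u ^ ((m + 1) * n) / (1 + u) ^ 3 := by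
  have hexp := hasSum_integral_log_one_add_pow_div hn
  have hterm : ∀ k : ℕ, ((n : ℝ) ^ (k + 1))⁻¹ * ∑' m : ℕ,
      (-1 : ℝ) ^ ((m + 1) + (k + 1)) * zt1 m k / (m + 1) *
        ∫ u in (0:ℝ)..1, u ^ ((m + 1) * n) / (1 + u) ^ 3 =
      ∫ u in (0 : ℝ)..1, (log (1 + u ^ n) / n) ^ (k + 1) / (k + 1)! / (1 + u) ^ 3 := by
    intro k
    rw [(hasSum_zt1_mul_integral_pow hn k).tsum_eq, ← intervalIntegral.integral_const_mul]
    refine intervalIntegral.integral_congr fun u _ => ?_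
    rw [div_pow, inv_eq_one_div]
    ring
  refine ⟨fun k => (hasSum_zt1_mul_integral_pow hn k).summable.abs, ?_, ?_⟩
  · simpa only [hterm] using ((summable_nat_add_iff 1).2 hexp.summable).abs
  · rw [integral_pow_add_one_sub_pow_rpow_inv (by omega), ← hexp.tsum_eq,
      hexp.summable.tsum_eq_zero_add, tsum_congr hterm]
    simp only [pow_zero, Nat.factorial_zero, Nat.cast_one, div_one, one_div,
      integral_inv_one_add_pow_three]
    ring
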